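/- arXiv:1808.06996 — 2 statements merged into one kernel-verified Lean document; each statement's English description precedes it below -/
import Mathlib

section
/- For every real x with |x| ≤ 1/2, one has (1 − x²)^{-1} ≤ cosh(2x), where cosh(y) = (e^y + e^{-y})/2. -/
/-- For every real `x` with `|x| ≤ 1/2`, one has `(1 - x²)⁻¹ ≤ cosh (2x)`. -/
theorem stmt_3 (x : ℝ) (hx : |x| ≤ 1 / 2) : (1 - x ^ 2)⁻¹ ≤ Real.cosh (2 * x) := by
  have hx2 : x ^ 2 ≤ 1 / 4 := by
    have := sq_abs x
    nlinarith [abs_nonneg x]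
  have hpos : (0:ℝ) < 1 - x ^ 2 := by nlinarith
  have hsinh : x ^ 2 ≤ Real.sinh x ^ 2 := by
    rcases lt_trichotomy x 0 with h | h | h
    · have := (Real.sinh_lt_self_iff (x := x)).2 h
      nlinarith
    · simp [h]
    · have := (Real.self_lt_sinh_iff (x := x)).2 h
      nlinarith
  have hcosh : Real.cosh (2 * x) = 2 * Real.sinh x ^ 2 + 1 := by
    rw [Real.cosh_two_mul, Real.cosh_sq]; ring
  rw [inv_le_iff_one_le_mul₀ hpos, hcosh]
  nlinarith
end

section
/- Let n ≥ 1, κ > 0, and let φ, φ̄ ∈ [0,1] satisfy |φ − φ̄| ≥ max{ κ/(2n), sqrt( κ·φ·(1−φ)/(2n) ) }. Then |φ − φ̄| ≥ sqrt( κ·φ̄·(1−φ̄)/(6n) ). -/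
/-- If `φ, φ̄ ∈ [0,1]` satisfy
`|φ - φ̄| ≥ max { κ/(2n), √(κ φ (1-φ)/(2n)) }` with `n ≥ 1` and `κ > 0`, then
`|φ - φ̄| ≥ √(κ φ̄ (1-φ̄)/(6n))`. -/
theorem stmt_13 (n : ℕ) (hn : 1 ≤ n) (κ : ℝ) (hκ : 0 < κ) (φ φb : ℝ)
    (hφ : φ ∈ Set.Icc (0 : ℝ) 1) (hφb : φb ∈ Set.Icc (0 : ℝ) 1)
    (h : |φ - φb| ≥ max (κ / (2 * n)) (Real.sqrt (κ * φ * (1 - φ) / (2 * n)))) :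
    |φ - φb| ≥ Real.sqrt (κ * φb * (1 - φb) / (6 * n)) := by
  obtain ⟨hφ0, hφ1⟩ := hφ
  obtain ⟨hφb0, hφb1⟩ := hφb
  set d := |φ - φb| with hdef
  have hd0 : 0 ≤ d := abs_nonneg _
  have hN : (1 : ℝ) ≤ (n : ℝ) := by exact_mod_cast hn
  have hNpos : (0 : ℝ) < 2 * n := by linarith
  have h1 : κ / (2 * n) ≤ d := le_trans (le_max_left _ _) h
  have h1' : κ ≤ 2 * n * d := by
    rwa [div_le_iff₀ hNpos, mul_comm] at h1
  have harg : 0 ≤ κ * φ * (1 - φ) / (2 * n) := by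
    have : 0 ≤ 1 - φ := by linarith
    positivity
  have h2 : Real.sqrt (κ * φ * (1 - φ) / (2 * n)) ≤ d := le_trans (le_max_right _ _) h
  have h2' : κ * φ * (1 - φ) / (2 * n) ≤ d ^ 2 := by
    have := Real.sq_sqrt harg
    nlinarith [Real.sqrt_nonneg (κ * φ * (1 - φ) / (2 * n))]
  have h2'' : κ * φ * (1 - φ) ≤ 2 * n * d ^ 2 := by
    rw [div_le_iff₀ hNpos] at h2'
    linarith [h2']
  have habs1 : φ - φb ≤ d := le_abs_self _
  have habs2 : φb - φ ≤ d := by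
    have := neg_abs_le (φ - φb); linarith
  have hkey : κ * φb * (1 - φb) ≤ 6 * n * d ^ 2 := by
    nlinarith [mul_nonneg (mul_nonneg hκ.le hd0) hd0,
      mul_nonneg hd0 hd0, sq_nonneg (φ - φb),
      mul_nonneg (sub_nonneg.2 habs1) (mul_nonneg hκ.le (sub_nonneg.2 hφ1)),
      mul_nonneg (sub_nonneg.2 habs2) (mul_nonneg hκ.le (sub_nonneg.2 hφ1)),
      mul_nonneg (sub_nonneg.2 habs1) (mul_nonneg hκ.le hφb0),
      mul_nonneg (sub_nonneg.2 habs2) (mul_nonneg hκ.le hφb0),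
      mul_nonneg (sub_nonneg.2 habs1) (mul_nonneg hκ.le hφ0),
      mul_nonneg (sub_nonneg.2 habs2) (mul_nonneg hκ.le hφ0)]
  have hgoal : κ * φb * (1 - φb) / (6 * n) ≤ d ^ 2 := by
    rw [div_le_iff₀ (by linarith : (0:ℝ) < 6 * n)]
    linarith
  calc Real.sqrt (κ * φb * (1 - φb) / (6 * n)) ≤ Real.sqrt (d ^ 2) :=
        Real.sqrt_le_sqrt hgoal
    _ = d := by rw [Real.sqrt_sq hd0]
end
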